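/- arXiv:1805.10058 — 3 statements merged into one kernel-verified Lean document; each statement's English description precedes it below -/
import Mathlib

section
/- Let f₁₁, f₂₂, f₁₂ be real numbers with f₁₁ + f₂₂ = (α+β)L⁺, f₁₁ − f₂₂ = (α−β)L⁻, and f₁₂² = (α−β)²·a₁²·a₂², where L⁺ = m₁s₂ + s₁m₂, L⁻ = m₁s₂ − s₁m₂, all of m₁, m₂, s₁, s₂ ≥ 0, m₁s₁ ≥ a₁², m₂s₂ ≥ a₂², and α ≥ β > 0. Then the symmetric matrix [[f₁₁, f₁₂],[f₁₂, f₂₂]] is positive semidefinite. -/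
/-!
With `A = m₁s₂ ≥ 0` and `B = s₁m₂ ≥ 0` the diagonal entries are `f₁₁ = αA + βB` and
`f₂₂ = βA + αB`, both nonnegative, and since `a₁²a₂² ≤ (m₁s₁)(m₂s₂) = AB`,
`f₁₁f₂₂ - f₁₂² ≥ (αA + βB)(βA + αB) - (α - β)²AB = αβ(A + B)² ≥ 0`.
A symmetric 2×2 matrix with nonnegative diagonal and nonnegative determinant is positive
semidefinite.
-/

section TwoByTwo

variable {R : Type*} [CommRing R] [LinearOrder R] [IsStrictOrderedRing R]

theorem quadratic_form_nonneg_of_sq_le_mul {a b c : R} (ha : 0 ≤ a) (hc : 0 ≤ c)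
    (hb : b ^ 2 ≤ a * c) (x y : R) : 0 ≤ a * x ^ 2 + 2 * b * x * y + c * y ^ 2 := by
  rcases ha.eq_or_lt with rfl | ha
  · obtain rfl : b = 0 :=
      pow_eq_zero_iff two_ne_zero |>.mp (le_antisymm (by simpa using hb) (sq_nonneg b))
    simpa using mul_nonneg hc (sq_nonneg y)
  · refine nonneg_of_mul_nonneg_right ?_ ha
    calc 0 ≤ (a * x + b * y) ^ 2 + (a * c - b ^ 2) * y ^ 2 := by
          have := sub_nonneg.mpr hb
          positivity
      _ = a * (a * x ^ 2 + 2 * b * x * y + c * y ^ 2) := by ring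

theorem Matrix.posSemidef_fin_two_of_sq_le_mul [StarRing R] [TrivialStar R] {a b c : R}
    (ha : 0 ≤ a) (hc : 0 ≤ c) (hb : b ^ 2 ≤ a * c) :
    (Matrix.of !![a, b; b, c]).PosSemidef := by
  rw [show Matrix.of !![a, b; b, c] = !![a, b; b, c] from rfl]
  refine .of_dotProduct_mulVec_nonneg ?_ fun x ↦ ?_
  · ext i j
    fin_cases i <;> fin_cases j <;> simp
  · convert quadratic_form_nonneg_of_sq_le_mul ha hc hb (x 0) (x 1) using 1
    simp only [dotProduct, Pi.star_apply, star_trivial, cons_mulVec, Fin.sum_univ_two, Fin.isValue,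
      cons_val_zero, cons_val_one, cons_val_fin_one, empty_mulVec]
    ring

end TwoByTwo

theorem curl_div_symbol_det_identity (α β A B : ℝ) :
    (α * A + β * B) * (β * A + α * B) - (α - β) ^ 2 * (A * B) = α * β * (A + B) ^ 2 := by
  ring

theorem curl_div_symbol_2D_posSemidef
    (m1 m2 s1 s2 a1 a2 α β f11 f22 f12 : ℝ)
    (hm1 : 0 ≤ m1) (hm2 : 0 ≤ m2) (hs1 : 0 ≤ s1) (hs2 : 0 ≤ s2)
    (h1 : a1 ^ 2 ≤ m1 * s1) (h2 : a2 ^ 2 ≤ m2 * s2)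
    (hαβ : β ≤ α) (hβ : 0 < β)
    (htr : f11 + f22 = (α + β) * (m1 * s2 + s1 * m2))
    (hdiff : f11 - f22 = (α - β) * (m1 * s2 - s1 * m2))
    (hoff : f12 ^ 2 = (α - β) ^ 2 * a1 ^ 2 * a2 ^ 2) :
    (Matrix.of !![f11, f12; f12, f22]).PosSemidef := by
  set A := m1 * s2
  set B := s1 * m2
  have hA : 0 ≤ A := mul_nonneg hm1 hs2
  have hB : 0 ≤ B := mul_nonneg hs1 hm2
  have hα : 0 ≤ α := hβ.le.trans hαβ
  have hf11 : f11 = α * A + β * B := by linarith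
  have hf22 : f22 = β * A + α * B := by linarith
  have hAB : a1 ^ 2 * a2 ^ 2 ≤ A * B :=
    (mul_le_mul h1 h2 (sq_nonneg a2) ((sq_nonneg a1).trans h1)).trans_eq (by ring)
  refine Matrix.posSemidef_fin_two_of_sq_le_mul (by rw [hf11]; positivity)
    (by rw [hf22]; positivity) ?_
  calc f12 ^ 2 = (α - β) ^ 2 * (a1 ^ 2 * a2 ^ 2) := by rw [hoff]; ring
    _ ≤ (α - β) ^ 2 * (A * B) := by gcongr
    _ ≤ f11 * f22 := by
      have := curl_div_symbol_det_identity α β A B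
      rw [hf11, hf22]
      linarith [mul_nonneg (mul_nonneg hα hβ.le) (sq_nonneg (A + B))]
end

section
/- Let B be the 3×3 real symmetric matrix with entries b₁₁ = γ₂ m₁ s₂ m₃ + γ₃ m₁ m₂ s₃, b₂₂ = γ₁ s₁ m₂ m₃ + γ₃ m₁ m₂ s₃, b₃₃ = γ₁ s₁ m₂ m₃ + γ₂ m₁ s₂ m₃, b₁₂ = −δ₃ a₁ a₂ m₃, b₁₃ = −δ₂ a₁ m₂ a₃, b₂₃ = −δ₁ m₁ a₂ a₃, where γᵢ = νᵢ²/(ν₁ν₂ν₃), δᵢ = 1/νᵢ with ν₁, ν₂, ν₃ > 0, and mᵢ, sᵢ ≥ 0 with mᵢ sᵢ ≥ aᵢ² for i = 1, 2, 3. Then det(B) ≥ 2 δ₁δ₂δ₃ m₁m₂m₃ (m₁s₁m₂s₂m₃s₃ − (a₁a₂a₃)²) ≥ 0. -/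
/-!
Write the diagonal of `B` as `x₂ + x₃, x₁ + x₃, x₁ + x₂` with `x₁ = γ₁ s₁ m₂ m₃` etc., and let `cᵢ`
be the off-diagonal entry not in row or column `i`. Then
`det B = 2 (x₁x₂x₃ + c₁c₂c₃) + ∑ (xⱼ + xₖ)(xⱼxₖ - cᵢ²)`.
Since `γⱼγₖ = δᵢ²`, each `xⱼxₖ - cᵢ² = δᵢ² mᵢ² (mⱼsⱼmₖsₖ - aⱼ²aₖ²)` is nonnegative, and since
`γ₁γ₂γ₃ = δ₁δ₂δ₃`, the term `2 (x₁x₂x₃ + c₁c₂c₃)` is exactly the claimed lower bound.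
-/

theorem Matrix.det_fin_three_of_add_diag {R : Type*} [CommRing R] (x1 x2 x3 c1 c2 c3 : R) :
    !![x2 + x3, c3, c2; c3, x1 + x3, c1; c2, c1, x1 + x2].det =
      2 * (x1 * x2 * x3 + c1 * c2 * c3) + (x2 + x3) * (x2 * x3 - c1 ^ 2) +
        (x1 + x3) * (x1 * x3 - c2 ^ 2) + (x1 + x2) * (x1 * x2 - c3 ^ 2) := by
  rw [Matrix.det_fin_three]
  simp only [Matrix.of_apply, Matrix.cons_val', Matrix.cons_val_zero, Matrix.cons_val_fin_one,
    Matrix.cons_val_one, Matrix.cons_val]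
  ring

theorem Matrix.two_mul_add_le_det_fin_three_of_add_diag {R : Type*} [CommRing R] [LinearOrder R]
    [IsStrictOrderedRing R] {x1 x2 x3 c1 c2 c3 : R} (hx1 : 0 ≤ x1) (hx2 : 0 ≤ x2) (hx3 : 0 ≤ x3)
    (hc1 : c1 ^ 2 ≤ x2 * x3) (hc2 : c2 ^ 2 ≤ x1 * x3) (hc3 : c3 ^ 2 ≤ x1 * x2) :
    2 * (x1 * x2 * x3 + c1 * c2 * c3) ≤
      !![x2 + x3, c3, c2; c3, x1 + x3, c1; c2, c1, x1 + x2].det := by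
  rw [Matrix.det_fin_three_of_add_diag]
  have h1 := mul_nonneg (add_nonneg hx2 hx3) (sub_nonneg.mpr hc1)
  have h2 := mul_nonneg (add_nonneg hx1 hx3) (sub_nonneg.mpr hc2)
  have h3 := mul_nonneg (add_nonneg hx1 hx2) (sub_nonneg.mpr hc3)
  linarith

theorem sq_mul_le_mul_of_sq_le {R : Type*} [CommRing R] [LinearOrder R] [IsStrictOrderedRing R]
    {a b p q : R} (ha : a ^ 2 ≤ p) (hb : b ^ 2 ≤ q) : (a * b) ^ 2 ≤ p * q := by
  rw [mul_pow]
  exact mul_le_mul ha hb (sq_nonneg b) ((sq_nonneg a).trans ha)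

theorem det_3D_symbol_lower_bound
    (ν1 ν2 ν3 m1 m2 m3 s1 s2 s3 a1 a2 a3 : ℝ)
    (hν1 : 0 < ν1) (hν2 : 0 < ν2) (hν3 : 0 < ν3)
    (hm1 : 0 ≤ m1) (hm2 : 0 ≤ m2) (hm3 : 0 ≤ m3)
    (hs1 : 0 ≤ s1) (hs2 : 0 ≤ s2) (hs3 : 0 ≤ s3)
    (h1 : a1 ^ 2 ≤ m1 * s1) (h2 : a2 ^ 2 ≤ m2 * s2) (h3 : a3 ^ 2 ≤ m3 * s3) :
    let γ1 := ν1 ^ 2 / (ν1 * ν2 * ν3)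
    let γ2 := ν2 ^ 2 / (ν1 * ν2 * ν3)
    let γ3 := ν3 ^ 2 / (ν1 * ν2 * ν3)
    let δ1 := 1 / ν1
    let δ2 := 1 / ν2
    let δ3 := 1 / ν3
    let B : Matrix (Fin 3) (Fin 3) ℝ :=
      !![γ2 * m1 * s2 * m3 + γ3 * m1 * m2 * s3, -(δ3 * a1 * a2 * m3), -(δ2 * a1 * m2 * a3);
         -(δ3 * a1 * a2 * m3), γ1 * s1 * m2 * m3 + γ3 * m1 * m2 * s3, -(δ1 * m1 * a2 * a3);
         -(δ2 * a1 * m2 * a3), -(δ1 * m1 * a2 * a3), γ1 * s1 * m2 * m3 + γ2 * m1 * s2 * m3]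
    2 * δ1 * δ2 * δ3 * m1 * m2 * m3 * (m1 * s1 * m2 * s2 * m3 * s3 - (a1 * a2 * a3) ^ 2)
        ≤ B.det
      ∧ 0 ≤ 2 * δ1 * δ2 * δ3 * m1 * m2 * m3 *
          (m1 * s1 * m2 * s2 * m3 * s3 - (a1 * a2 * a3) ^ 2) := by
  intro γ1 γ2 γ3 δ1 δ2 δ3
  have hγ23 : γ2 * γ3 = δ1 ^ 2 := by simp only [γ2, γ3, δ1]; field_simp
  have hγ13 : γ1 * γ3 = δ2 ^ 2 := by simp only [γ1, γ3, δ2]; field_simp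
  have hγ12 : γ1 * γ2 = δ3 ^ 2 := by simp only [γ1, γ2, δ3]; field_simp
  have hγ : γ1 * γ2 * γ3 = δ1 * δ2 * δ3 := by simp only [γ1, γ2, γ3, δ1, δ2, δ3]; field_simp
  have hγ_nonneg (ν : ℝ) : 0 ≤ ν ^ 2 / (ν1 * ν2 * ν3) := by positivity
  have hγ1 : 0 ≤ γ1 := hγ_nonneg ν1
  have hγ2 : 0 ≤ γ2 := hγ_nonneg ν2
  have hγ3 : 0 ≤ γ3 := hγ_nonneg ν3
  have hδ1 : 0 ≤ δ1 := one_div_nonneg.mpr hν1.le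
  have hδ2 : 0 ≤ δ2 := one_div_nonneg.mpr hν2.le
  have hδ3 : 0 ≤ δ3 := one_div_nonneg.mpr hν3.le
  -- keeps `linear_combination` from unfolding the weights into expressions in `νᵢ⁻¹`
  clear_value γ1 γ2 γ3 δ1 δ2 δ3
  intro B
  have hA : (a1 * a2 * a3) ^ 2 ≤ m1 * s1 * m2 * s2 * m3 * s3 := by
    linarith [sq_mul_le_mul_of_sq_le (sq_mul_le_mul_of_sq_le h1 h2) h3]
  have hdet := Matrix.two_mul_add_le_det_fin_three_of_add_diag
    (x1 := γ1 * s1 * m2 * m3) (x2 := γ2 * m1 * s2 * m3) (x3 := γ3 * m1 * m2 * s3)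
    (c1 := -(δ1 * m1 * a2 * a3)) (c2 := -(δ2 * a1 * m2 * a3)) (c3 := -(δ3 * a1 * a2 * m3))
    (by positivity) (by positivity) (by positivity)
    (by linear_combination mul_le_mul_of_nonneg_left (sq_mul_le_mul_of_sq_le h2 h3)
          (sq_nonneg (δ1 * m1)) - m1 ^ 2 * (m2 * s2) * (m3 * s3) * hγ23)
    (by linear_combination mul_le_mul_of_nonneg_left (sq_mul_le_mul_of_sq_le h1 h3)
          (sq_nonneg (δ2 * m2)) - m2 ^ 2 * (m1 * s1) * (m3 * s3) * hγ13)
    (by linear_combination mul_le_mul_of_nonneg_left (sq_mul_le_mul_of_sq_le h1 h2)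
          (sq_nonneg (δ3 * m3)) - m3 ^ 2 * (m1 * s1) * (m2 * s2) * hγ12)
  refine ⟨le_trans (le_of_eq ?_) hdet, ?_⟩
  · linear_combination -2 * m1 * m2 * m3 * (m1 * s1 * m2 * s2 * m3 * s3) * hγ
  · exact mul_nonneg (by positivity) (sub_nonneg.mpr hA)
end

section
/- Under the hypotheses of the 3D symbol estimate (mᵢ, sᵢ ≥ 0, mᵢsᵢ ≥ aᵢ², νᵢ > 0, γᵢ = νᵢ²/(ν₁ν₂ν₃)), the 2×2 principal minor det(B₃₃) of the matrix B (rows and columns 1, 2) satisfies det(B₃₃) ≥ γ₃ m₁ m₂ s₃ · L, where L := γ₁ s₁ m₂ m₃ + γ₂ m₁ s₂ m₃ + γ₃ m₁ m₂ s₃ ≥ 0; in particular det(B₃₃) ≥ 0. -/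
theorem principal_minor_3D_symbol_lower_bound
    (ν1 ν2 ν3 m1 m2 m3 s1 s2 s3 a1 a2 a3 : ℝ)
    (hν1 : 0 < ν1) (hν2 : 0 < ν2) (hν3 : 0 < ν3)
    (hm1 : 0 ≤ m1) (hm2 : 0 ≤ m2) (hm3 : 0 ≤ m3)
    (hs1 : 0 ≤ s1) (hs2 : 0 ≤ s2) (hs3 : 0 ≤ s3)
    (h1 : a1 ^ 2 ≤ m1 * s1) (h2 : a2 ^ 2 ≤ m2 * s2) (h3 : a3 ^ 2 ≤ m3 * s3) :
    let γ1 := ν1 ^ 2 / (ν1 * ν2 * ν3)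
    let γ2 := ν2 ^ 2 / (ν1 * ν2 * ν3)
    let γ3 := ν3 ^ 2 / (ν1 * ν2 * ν3)
    let δ3 := 1 / ν3
    let L := γ1 * s1 * m2 * m3 + γ2 * m1 * s2 * m3 + γ3 * m1 * m2 * s3
    let B33 : Matrix (Fin 2) (Fin 2) ℝ :=
      !![γ2 * m1 * s2 * m3 + γ3 * m1 * m2 * s3, -(δ3 * a1 * a2 * m3);
         -(δ3 * a1 * a2 * m3), γ1 * s1 * m2 * m3 + γ3 * m1 * m2 * s3]
    0 ≤ L ∧ γ3 * m1 * m2 * s3 * L ≤ B33.det ∧ 0 ≤ B33.det := by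
  intro γ1 γ2 γ3 δ3 L B33
  have hp : 0 < ν1 * ν2 * ν3 := by positivity
  have hγ1 : 0 ≤ γ1 := by positivity
  have hγ2 : 0 ≤ γ2 := by positivity
  have hγ3 : 0 ≤ γ3 := by positivity
  have hL : 0 ≤ L := by
    have : 0 ≤ γ1 * s1 * m2 * m3 := by positivity
    have : 0 ≤ γ2 * m1 * s2 * m3 := by positivity
    have : 0 ≤ γ3 * m1 * m2 * s3 := by positivity
    unfold L; linarith [mul_nonneg (mul_nonneg (mul_nonneg hγ1 hs1) hm2) hm3,
      mul_nonneg (mul_nonneg (mul_nonneg hγ2 hm1) hs2) hm3,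
      mul_nonneg (mul_nonneg (mul_nonneg hγ3 hm1) hm2) hs3]
  have hdet : B33.det = (γ2 * m1 * s2 * m3 + γ3 * m1 * m2 * s3) *
      (γ1 * s1 * m2 * m3 + γ3 * m1 * m2 * s3) - (δ3 * a1 * a2 * m3) ^ 2 := by
    simp [B33, Matrix.det_fin_two_of]; ring
  have hkey : γ1 * γ2 = δ3 ^ 2 := by
    unfold γ1 γ2 δ3
    field_simp
  have hmain : γ3 * m1 * m2 * s3 * L ≤ B33.det := by
    rw [hdet]
    have hle : a1 ^ 2 * a2 ^ 2 ≤ m1 * s1 * (m2 * s2) :=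
      mul_le_mul h1 h2 (sq_nonneg a2) (mul_nonneg hm1 hs1)
    have hnn : 0 ≤ δ3 ^ 2 * m3 ^ 2 * (m1 * s1 * (m2 * s2) - a1 ^ 2 * a2 ^ 2) :=
      mul_nonneg (mul_nonneg (sq_nonneg _) (sq_nonneg _)) (sub_nonneg.mpr hle)
    have hid : (γ2 * m1 * s2 * m3 + γ3 * m1 * m2 * s3) *
        (γ1 * s1 * m2 * m3 + γ3 * m1 * m2 * s3) - (δ3 * a1 * a2 * m3) ^ 2
        - γ3 * m1 * m2 * s3 * L
        = δ3 ^ 2 * m3 ^ 2 * (m1 * s1 * (m2 * s2) - a1 ^ 2 * a2 ^ 2) := by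
      show _ = _
      linear_combination (m1 * s1 * m2 * s2 * m3 ^ 2) * hkey
    linarith [hid, hnn]
  exact ⟨hL, hmain, le_trans (mul_nonneg (mul_nonneg (mul_nonneg (mul_nonneg hγ3 hm1) hm2) hs3) hL) hmain⟩
end
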